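/- arXiv:1703.04950 — 5 statements merged into one kernel-verified Lean document; each statement's English description precedes it below -/
import Mathlib

section
/- The equation x^2 + 5^a·11^b = y^4 has no solutions in positive integers x, y with gcd(x,y)=1 and nonnegative integers a, b. -/
/-!
Factor `(y² - x)(y² + x) = 5^a 11^b`. Since `x, y` are coprime and the product is odd, the two
factors `s < t` are coprime, and `s + t = 2y²`. If `5 ∣ st`, one factor is divisible by `5`
and the other is a power of `11`, hence `≡ 1 mod 5`; otherwise `s = 1` and `t` is a nontrivial
power of `11`. Either way `2y² ≡ 1` modulo `p = 5` or `p = 11`, which would make `2` a square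
mod `p`; but `p ≡ 3, 5 (mod 8)`.
-/

namespace ZMod

theorem two_mul_sq_ne_one {p : ℕ} [Fact p.Prime] (hp : p % 8 = 3 ∨ p % 8 = 5) (z : ZMod p) :
    2 * z ^ 2 ≠ 1 := by
  intro h
  have hz : z ≠ 0 := by rintro rfl; simp at h
  have hsq : IsSquare (2 : ZMod p) := ⟨z⁻¹, by field_simp; linear_combination h⟩
  rw [exists_sq_eq_two_iff (by omega)] at hsq
  omega

end ZMod

theorem add_ne_two_mul_sq_of_dvd_of_modEq_one {p s t : ℕ} [Fact p.Prime]
    (hp : p % 8 = 3 ∨ p % 8 = 5) (hs : p ∣ s) (ht : t ≡ 1 [MOD p]) (y : ℕ) :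
    s + t ≠ 2 * y ^ 2 := by
  intro h
  have hcast := congrArg (Nat.cast : ℕ → ZMod p) h
  push_cast at hcast
  rw [(ZMod.natCast_eq_zero_iff s p).2 hs, (ZMod.natCast_eq_natCast_iff t 1 p).2 ht] at hcast
  exact ZMod.two_mul_sq_ne_one hp y (by simpa using hcast.symm)

theorem Nat.coprime_sub_add_of_odd {n x : ℕ} (hxn : x.Coprime n) (hle : x ≤ n)
    (hodd : Odd (n + x)) : (n - x).Coprime (n + x) := by
  set g := (n - x).gcd (n + x)
  have h2n : g ∣ 2 * n := by
    have := Nat.dvd_add (Nat.gcd_dvd_left (n - x) (n + x)) (Nat.gcd_dvd_right (n - x) (n + x))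
    rwa [show n - x + (n + x) = 2 * n by omega] at this
  have h2x : g ∣ 2 * x := by
    have := Nat.dvd_sub (Nat.gcd_dvd_right (n - x) (n + x)) (Nat.gcd_dvd_left (n - x) (n + x))
    rwa [show n + x - (n - x) = 2 * x by omega] at this
  have h2 : g ∣ 2 := by
    simpa [Nat.gcd_mul_left, Nat.Coprime.gcd_eq_one hxn.symm] using Nat.dvd_gcd h2n h2x
  have hg : Odd g := hodd.of_dvd_nat (Nat.gcd_dvd_right _ _)
  rcases (Nat.dvd_prime Nat.prime_two).1 h2 with h | h
  · exact h
  · exact absurd (h ▸ hg) (by decide)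

theorem modEq_one_of_coprime_of_dvd_pow_mul_pow {p q s t a b : ℕ} (hq : q.Prime)
    (hqp : q ≡ 1 [MOD p]) (hs : p ∣ s) (hcop : s.Coprime t) (ht : t ∣ p ^ a * q ^ b) :
    t ≡ 1 [MOD p] := by
  have htp : t.Coprime (p ^ a) := (Nat.Coprime.coprime_dvd_left hs hcop).symm.pow_right a
  obtain ⟨j, -, rfl⟩ := (Nat.dvd_prime_pow hq).1 (htp.dvd_of_dvd_mul_left ht)
  simpa using hqp.pow j

theorem add_ne_two_mul_sq_of_coprime_of_mul_eq {s t a b : ℕ} (hst : s * t = 5 ^ a * 11 ^ b)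
    (hcop : s.Coprime t) (hlt : s < t) (y : ℕ) : s + t ≠ 2 * y ^ 2 := by
  have h11 : Nat.Prime 11 := by norm_num
  have := Fact.mk Nat.prime_five
  have := Fact.mk h11
  by_cases h5 : 5 ∣ s * t
  · rcases (Nat.Prime.dvd_mul Nat.prime_five).1 h5 with h5s | h5t
    · have ht : t ≡ 1 [MOD 5] :=
        modEq_one_of_coprime_of_dvd_pow_mul_pow h11 (by decide) h5s hcop (Dvd.intro_left s hst)
      exact add_ne_two_mul_sq_of_dvd_of_modEq_one (by norm_num) h5s ht y
    · have hs : s ≡ 1 [MOD 5] :=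
        modEq_one_of_coprime_of_dvd_pow_mul_pow h11 (by decide) h5t hcop.symm (Dvd.intro t hst)
      rw [add_comm]
      exact add_ne_two_mul_sq_of_dvd_of_modEq_one (by norm_num) h5t hs y
  · obtain rfl : a = 0 := by
      by_contra ha
      exact h5 (hst ▸ dvd_mul_of_dvd_left (dvd_pow_self 5 ha) _)
    rw [pow_zero, one_mul] at hst
    obtain ⟨i, -, rfl⟩ := (Nat.dvd_prime_pow h11).1 (Dvd.intro t hst)
    obtain ⟨j, -, rfl⟩ := (Nat.dvd_prime_pow h11).1 (Dvd.intro_left _ hst)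
    have hij : i < j := (Nat.pow_lt_pow_iff_right (by norm_num)).1 hlt
    rw [hcop.eq_one_of_dvd (pow_dvd_pow 11 hij.le), add_comm]
    exact add_ne_two_mul_sq_of_dvd_of_modEq_one (by norm_num) (dvd_pow_self 11 (by omega)) rfl y

theorem no_solutions_n_eq_4_general (x y a b : ℕ) (hx : 0 < x)
    (hgcd : Nat.gcd x y = 1) :
    x ^ 2 + 5 ^ a * 11 ^ b ≠ y ^ 4 := by
  intro h
  have hy4 : (y ^ 2) ^ 2 = y ^ 4 := by ring
  have hlt : x < y ^ 2 := by
    have : 0 < 5 ^ a * 11 ^ b := by positivity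
    exact lt_of_pow_lt_pow_left₀ 2 (Nat.zero_le _) (by omega)
  have hprod : (y ^ 2 - x) * (y ^ 2 + x) = 5 ^ a * 11 ^ b := by
    rw [mul_comm, ← Nat.sq_sub_sq]
    omega
  have hodd : Odd (y ^ 2 + x) :=
    ((Odd.pow (by decide)).mul (Odd.pow (by decide))).of_dvd_nat (Dvd.intro_left _ hprod)
  have hcop := Nat.coprime_sub_add_of_odd (Nat.Coprime.pow_right 2 hgcd) hlt.le hodd
  exact add_ne_two_mul_sq_of_coprime_of_mul_eq hprod hcop (by omega) y (by omega)

theorem no_solutions_n_eq_4 (x y a b : ℕ) (hx : 0 < x) (hy : 0 < y)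
    (hgcd : Nat.gcd x y = 1) :
    x ^ 2 + 5 ^ a * 11 ^ b ≠ y ^ 4 :=
  no_solutions_n_eq_4_general x y a b hx hgcd
end

section
/- The polynomial g(t) = t^5 + 65·t^4 − 870·t^3 − 18990·t^2 + 26325·t + 255069 is irreducible over ℚ. -/
/-!
Reduce modulo 19. Over `𝔽₁₉` a reducible monic quintic has a monic factor of degree 1 or 2;
there is no root, and the remainder modulo each of the 361 monic quadratics `X ^ 2 + a X + b` is
nonzero, both checked by exhaustive evaluation. So the quintic is irreducible over `𝔽₁₉`, hence
(being monic) over `ℤ`, hence over `ℚ` by Gauss's lemma.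
-/

open Polynomial

namespace Polynomial

variable {R : Type*}

theorem Monic.eq_X_sq_add_C_mul_X_add_C [Semiring R] {p : R[X]} (hm : p.Monic)
    (hd : p.natDegree = 2) : p = X ^ 2 + C (p.coeff 1) * X + C (p.coeff 0) := by
  have hc2 : p.coeff 2 = 1 := by rw [← hd]; exact hm
  conv_lhs => rw [p.as_sum_range_C_mul_X_pow, hd]
  simp only [Nat.reduceAdd, Finset.sum_range_succ, Finset.range_one, Finset.sum_singleton,
    pow_zero, mul_one, pow_one, hc2, map_one, one_mul]
  abel

section MonicQuintic

noncomputable def monicQuintic [Semiring R] (p₀ p₁ p₂ p₃ p₄ : R) : R[X] :=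
  X ^ 5 + C p₄ * X ^ 4 + C p₃ * X ^ 3 + C p₂ * X ^ 2 + C p₁ * X + C p₀

/-- The remainder `r.1 * X + r.2` of `monicQuintic p₀ p₁ p₂ p₃ p₄` modulo `X ^ 2 + a X + b`,
by synthetic division; `X ^ 3 + c X ^ 2 + d X + e` is the quotient. -/
def quadraticRemainder [Ring R] (p₀ p₁ p₂ p₃ p₄ a b : R) : R × R :=
  let c := p₄ - a
  let d := p₃ - a * c - b
  let e := p₂ - a * d - b * c
  (p₁ - a * e - b * d, p₀ - b * e)

variable (p₀ p₁ p₂ p₃ p₄ : R)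

theorem monic_monicQuintic [Semiring R] : (monicQuintic p₀ p₁ p₂ p₃ p₄).Monic := by
  unfold monicQuintic; monicity!

theorem natDegree_monicQuintic [Semiring R] [Nontrivial R] :
    (monicQuintic p₀ p₁ p₂ p₃ p₄).natDegree = 5 := by
  unfold monicQuintic; compute_degree!

theorem map_monicQuintic [Semiring R] {S : Type*} [Semiring S] (f : R →+* S) :
    (monicQuintic p₀ p₁ p₂ p₃ p₄).map f = monicQuintic (f p₀) (f p₁) (f p₂) (f p₃) (f p₄) := by
  simp [monicQuintic]

theorem eval_monicQuintic [Semiring R] (x : R) : (monicQuintic p₀ p₁ p₂ p₃ p₄).eval x =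
    x ^ 5 + p₄ * x ^ 4 + p₃ * x ^ 3 + p₂ * x ^ 2 + p₁ * x + p₀ := by
  simp [monicQuintic, eval_X_pow]

theorem monicQuintic_modByMonic [CommRing R] (a b : R) :
    monicQuintic p₀ p₁ p₂ p₃ p₄ %ₘ (X ^ 2 + C a * X + C b) =
      C (quadraticRemainder p₀ p₁ p₂ p₃ p₄ a b).1 * X +
        C (quadraticRemainder p₀ p₁ p₂ p₃ p₄ a b).2 := by
  nontriviality R
  have hmonic : (X ^ 2 + C a * X + C b).Monic := by monicity!
  refine (div_modByMonic_unique (X ^ 3 + C (p₄ - a) * X ^ 2 + C (p₃ - a * (p₄ - a) - b) * X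
    + C (p₂ - a * (p₃ - a * (p₄ - a) - b) - b * (p₄ - a))) _ hmonic ⟨?_, ?_⟩).2
  · simp only [monicQuintic, quadraticRemainder, C_sub, C_mul]
    ring
  · calc degree (C _ * X + C _) ≤ 1 := degree_linear_le
      _ < 2 := by norm_num
      _ = degree (X ^ 2 + C a * X + C b) := by symm; compute_degree!

theorem X_sq_add_C_mul_X_add_C_dvd_monicQuintic_iff [CommRing R] (a b : R) :
    X ^ 2 + C a * X + C b ∣ monicQuintic p₀ p₁ p₂ p₃ p₄ ↔
      quadraticRemainder p₀ p₁ p₂ p₃ p₄ a b = 0 := by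
  rw [← modByMonic_eq_zero_iff_dvd (by monicity!), monicQuintic_modByMonic]
  constructor
  · intro h
    exact Prod.ext (by simpa using congrArg (coeff · 1) h) (by simpa using congrArg (coeff · 0) h)
  · intro h
    simp [h]

theorem irreducible_monicQuintic [CommRing R] [IsDomain R]
    (hroot : ∀ x, x ^ 5 + p₄ * x ^ 4 + p₃ * x ^ 3 + p₂ * x ^ 2 + p₁ * x + p₀ ≠ 0)
    (hquad : ∀ a b, quadraticRemainder p₀ p₁ p₂ p₃ p₄ a b ≠ 0) :
    Irreducible (monicQuintic p₀ p₁ p₂ p₃ p₄) := by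
  have hne : monicQuintic p₀ p₁ p₂ p₃ p₄ ≠ 1 := fun h => by
    simpa [h] using natDegree_monicQuintic p₀ p₁ p₂ p₃ p₄
  rw [(monic_monicQuintic ..).irreducible_iff_lt_natDegree_lt hne, natDegree_monicQuintic]
  intro q hq hdeg
  obtain hq1 | hq2 : q.natDegree = 1 ∨ q.natDegree = 2 := by
    simp only [Finset.mem_Ioc] at hdeg; omega
  · rw [hq.eq_X_add_C hq1, ← sub_neg_eq_add, ← C_neg, dvd_iff_isRoot, IsRoot, eval_monicQuintic]
    exact hroot _
  · rw [hq.eq_X_sq_add_C_mul_X_add_C hq2, X_sq_add_C_mul_X_add_C_dvd_monicQuintic_iff]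
    exact hquad _ _

end MonicQuintic

theorem Monic.irreducible_map_rat_of_irreducible_map_zmod {f : ℤ[X]} (hf : f.Monic) (p : ℕ)
    [Fact p.Prime] (h : Irreducible (f.map (Int.castRingHom (ZMod p)))) :
    Irreducible (f.map (Int.castRingHom ℚ)) :=
  hf.irreducible_iff_irreducible_map_fraction_map.mp (hf.irreducible_of_irreducible_map _ _ h)

end Polynomial

instance Nat.fact_prime_nineteen : Fact (Nat.Prime 19) := ⟨by norm_num⟩

theorem quintic_irreducible :
    Irreducible (X ^ 5 + C 65 * X ^ 4 - C 870 * X ^ 3 - C 18990 * X ^ 2 +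
      C 26325 * X + C 255069 : ℚ[X]) := by
  have hQ : (X ^ 5 + C 65 * X ^ 4 - C 870 * X ^ 3 - C 18990 * X ^ 2 +
      C 26325 * X + C 255069 : ℚ[X]) =
      (monicQuintic (255069 : ℤ) 26325 (-18990) (-870) 65).map (Int.castRingHom ℚ) := by
    rw [map_monicQuintic]
    simp only [monicQuintic, eq_intCast, Int.cast_ofNat, Int.cast_neg, C_neg]
    ring
  have h19 : Irreducible (monicQuintic (255069 : ZMod 19) 26325 (-18990) (-870) 65) :=
    irreducible_monicQuintic _ _ _ _ _ (by decide) (by decide)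
  rw [hQ]
  refine (monic_monicQuintic ..).irreducible_map_rat_of_irreducible_map_zmod 19 ?_
  simpa [map_monicQuintic] using h19
end

section
/- The discriminant of the polynomial t^5 + 65·t^4 − 870·t^3 − 18990·t^2 + 26325·t + 255069 equals 2^32 · 3^12 · 5^11 · 11^6. -/
/-!
The discriminant is `det (V)²` for the Vandermonde matrix `V` of the roots, and
`det (V)² = det (Vᵀ V)`, where `Vᵀ V` is the Hankel matrix of the power sums `p₀, …, p₈` of the
roots. Vieta's formulas read the elementary symmetric functions of the roots off the
coefficients, Newton's identities turn them into the power sums, and the remaining `5 × 5`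
integer determinant is evaluated directly.
-/

open Polynomial Finset

namespace Matrix

variable {R : Type*} [CommRing R] {n : ℕ}

theorem det_vandermonde_sq (v : Fin n → R) :
    (vandermonde v).det ^ 2 = ∏ i, ∏ j ∈ univ.filter (fun j => i < j), (v i - v j) ^ 2 := by
  simp only [det_vandermonde, ← prod_pow, filter_lt_eq_Ioi]
  exact prod_congr rfl fun i _ => prod_congr rfl fun j _ => by ring

theorem det_vandermonde_sq_eq_det_powerSum (v : Fin n → R) :
    (vandermonde v).det ^ 2 = (of fun i j : Fin n => ∑ k, v k ^ (i + j : ℕ)).det := by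
  rw [sq]
  nth_rw 1 [← det_transpose]
  rw [← det_mul]
  congr 1
  ext i j
  exact vandermonde_transpose_mul_vandermonde v i j

end Matrix

theorem Multiset.esymm_eq_zero_of_card_lt {R : Type*} [CommSemiring R] {s : Multiset R} {n : ℕ}
    (h : card s < n) : s.esymm n = 0 := by
  simp [esymm, powersetCard_eq_empty _ h]

section RootsOfProduct

variable {R ι : Type*} [CommRing R] [Fintype ι]

theorem coeff_prod_univ_X_sub_C (r : ι → R) {k : ℕ} (hk : k ≤ Fintype.card ι) :
    (∏ i, (X - C (r i))).coeff k =
      (-1) ^ (Fintype.card ι - k) * (univ.val.map r).esymm (Fintype.card ι - k) := by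
  have := Multiset.prod_X_sub_C_coeff (univ.val.map r) (k := k) (by simpa using hk)
  rwa [Multiset.map_map, Multiset.card_map, card_val, card_univ] at this

theorem sum_pow_eq_mul_esymm_sub_sum (r : ι → R) {k : ℕ} (hk : 0 < k) :
    ∑ i, r i ^ k = (-1) ^ (k + 1) * k * (univ.val.map r).esymm k -
      ∑ a ∈ antidiagonal k with a.1 ∈ Set.Ioo 0 k,
        (-1) ^ a.1 * (univ.val.map r).esymm a.1 * ∑ i, r i ^ a.2 := by
  have := congrArg (MvPolynomial.aeval r) (MvPolynomial.psum_eq_mul_esymm_sub_sum ι R k hk)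
  simpa only [MvPolynomial.psum, MvPolynomial.aeval_esymm_eq_multiset_esymm, map_sub, map_mul,
    map_sum, map_pow, map_neg, map_one, map_natCast, MvPolynomial.aeval_X] using this

end RootsOfProduct

section Quintic

variable {R : Type*} [CommRing R]

theorem quintic_esymm (r : Fin 5 → R)
    (h : (X ^ 5 + C 65 * X ^ 4 - C 870 * X ^ 3 - C 18990 * X ^ 2 +
        C 26325 * X + C 255069 : R[X]) = ∏ i, (X - C (r i))) :
    (univ.val.map r).esymm 1 = -65 ∧ (univ.val.map r).esymm 2 = -870 ∧
      (univ.val.map r).esymm 3 = 18990 ∧ (univ.val.map r).esymm 4 = 26325 ∧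
      (univ.val.map r).esymm 5 = -255069 := by
  have hc (k : ℕ) (hk : k ≤ 5) :=
    (congrArg (coeff · k) h).trans (coeff_prod_univ_X_sub_C r (by simpa using hk))
  have c4 := hc 4 (by norm_num)
  have c3 := hc 3 (by norm_num)
  have c2 := hc 2 (by norm_num)
  have c1 := hc 1 (by norm_num)
  have c0 := hc 0 (by norm_num)
  -- `Fin.univ_val_map` would unfold `univ.val.map r` into a list literal; keep it folded.
  simp [coeff_X_pow, coeff_X, coeff_C, -Fin.univ_val_map] at c4 c3 c2 c1 c0
  exact ⟨by linear_combination c4, by linear_combination -c3, by linear_combination c2,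
    by linear_combination -c1, by linear_combination c0⟩

theorem quintic_powerSum_matrix (r : Fin 5 → R)
    (e1 : (univ.val.map r).esymm 1 = -65) (e2 : (univ.val.map r).esymm 2 = -870)
    (e3 : (univ.val.map r).esymm 3 = 18990) (e4 : (univ.val.map r).esymm 4 = 26325)
    (e5 : (univ.val.map r).esymm 5 = -255069) :
    Matrix.of (fun i j : Fin 5 => ∑ k, r k ^ (i + j : ℕ)) =
      !![5, -65, 5965, -387305, 29024725;
         -65, 5965, -387305, 29024725, -2109851345;
         5965, -387305, 29024725, -2109851345, 154896477085;
         -387305, 29024725, -2109851345, 154896477085, -11343987835385;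
         29024725, -2109851345, 154896477085, -11343987835385, 831387780935845] := by
  have e6 (k : ℕ) (hk : 5 < k) : (univ.val.map r).esymm k = 0 :=
    Multiset.esymm_eq_zero_of_card_lt (by simpa using hk)
  have s1 : ∑ i, r i = -65 := by
    simpa [sum_filter, Nat.sum_antidiagonal_eq_sum_range_succ_mk, sum_range_succ,
      -Fin.univ_val_map, e1] using sum_pow_eq_mul_esymm_sub_sum r one_pos
  have s2 : ∑ i, r i ^ 2 = 5965 := by
    rw [sum_pow_eq_mul_esymm_sub_sum r (by norm_num)]
    simp [sum_filter, Nat.sum_antidiagonal_eq_sum_range_succ_mk, sum_range_succ,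
      -Fin.univ_val_map, *]
    norm_num
  have s3 : ∑ i, r i ^ 3 = -387305 := by
    rw [sum_pow_eq_mul_esymm_sub_sum r (by norm_num)]
    simp [sum_filter, Nat.sum_antidiagonal_eq_sum_range_succ_mk, sum_range_succ,
      -Fin.univ_val_map, *]
    norm_num
  have s4 : ∑ i, r i ^ 4 = 29024725 := by
    rw [sum_pow_eq_mul_esymm_sub_sum r (by norm_num)]
    simp [sum_filter, Nat.sum_antidiagonal_eq_sum_range_succ_mk, sum_range_succ,
      -Fin.univ_val_map, *]
    norm_num
  have s5 : ∑ i, r i ^ 5 = -2109851345 := by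
    rw [sum_pow_eq_mul_esymm_sub_sum r (by norm_num)]
    simp [sum_filter, Nat.sum_antidiagonal_eq_sum_range_succ_mk, sum_range_succ,
      -Fin.univ_val_map, *]
    norm_num
  have s6 : ∑ i, r i ^ 6 = 154896477085 := by
    rw [sum_pow_eq_mul_esymm_sub_sum r (by norm_num)]
    simp [sum_filter, Nat.sum_antidiagonal_eq_sum_range_succ_mk, sum_range_succ,
      -Fin.univ_val_map, *]
    norm_num
  have s7 : ∑ i, r i ^ 7 = -11343987835385 := by
    rw [sum_pow_eq_mul_esymm_sub_sum r (by norm_num)]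
    simp [sum_filter, Nat.sum_antidiagonal_eq_sum_range_succ_mk, sum_range_succ,
      -Fin.univ_val_map, *]
    norm_num
  have s8 : ∑ i, r i ^ 8 = 831387780935845 := by
    rw [sum_pow_eq_mul_esymm_sub_sum r (by norm_num)]
    simp [sum_filter, Nat.sum_antidiagonal_eq_sum_range_succ_mk, sum_range_succ,
      -Fin.univ_val_map, *]
    norm_num
  ext i j
  fin_cases i <;> fin_cases j <;> simp [*]

theorem det_quintic_powerSum_matrix :
    (!![5, -65, 5965, -387305, 29024725;
        -65, 5965, -387305, 29024725, -2109851345;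
        5965, -387305, 29024725, -2109851345, 154896477085;
        -387305, 29024725, -2109851345, 154896477085, -11343987835385;
        29024725, -2109851345, 154896477085, -11343987835385, 831387780935845] :
      Matrix (Fin 5) (Fin 5) R).det = 2 ^ 32 * 3 ^ 12 * 5 ^ 11 * 11 ^ 6 := by
  simp [Matrix.det_succ_row_zero, Fin.sum_univ_succ, Fin.succAbove]
  norm_num

end Quintic

theorem quintic_discriminant (r : Fin 5 → ℂ)
    (h : (X ^ 5 + C 65 * X ^ 4 - C 870 * X ^ 3 - C 18990 * X ^ 2 +
        C 26325 * X + C 255069 : ℂ[X]) = ∏ i, (X - C (r i))) :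
    ∏ i, ∏ j ∈ Finset.univ.filter (fun j => i < j), (r i - r j) ^ 2 =
      2 ^ 32 * 3 ^ 12 * 5 ^ 11 * 11 ^ 6 := by
  obtain ⟨e1, e2, e3, e4, e5⟩ := quintic_esymm r h
  rw [← Matrix.det_vandermonde_sq, Matrix.det_vandermonde_sq_eq_det_powerSum,
    quintic_powerSum_matrix r e1 e2 e3 e4 e5, det_quintic_powerSum_matrix]
end

section
/- In L = ℚ(√−55) with ρ = (1+√−55)/2, the fourth power of the prime ideal ⟨2, ρ⟩ is the principal ideal generated by 2 − ρ, and the fourth power of ⟨2, 3+ρ⟩ is the principal ideal generated by 1 + ρ. -/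
/-!
Writing `P = (2, ρ)`, the relation `ρ² = ρ - 14` gives `P² = (4, ρ + 2)` and then
`P⁴ = (16, 4(ρ + 2), (ρ + 2)²) = (2 - ρ)`, since `16 = (2 - ρ)(1 + ρ)`, `4(ρ + 2) = (2 - ρ)(ρ - 3)`,
`(ρ + 2)² = -5(2 - ρ)` and `2 - ρ = -16 + 4(ρ + 2) - (ρ + 2)²`. This uses nothing but the
relation, so it holds in any commutative ring. The second ideal `(2, 3 + ρ) = (2, 1 - ρ)` is the
conjugate of the first: `1 - ρ` satisfies the same relation, and `2 - (1 - ρ) = 1 + ρ`.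
-/

open NumberField

namespace Ideal

variable {R : Type*} [CommRing R]

lemma span_pair_sq_le {a b : R} {I : Ideal R} (ha : a ^ 2 ∈ I) (hab : a * b ∈ I)
    (hb : b ^ 2 ∈ I) : span {a, b} ^ 2 ≤ I := by
  rw [sq, span_pair_mul_span_pair, span_le]
  simp only [Set.insert_subset_iff, Set.singleton_subset_iff, SetLike.mem_coe, ← sq, mul_comm b a]
  exact ⟨ha, hab, hab, hb⟩

lemma mem_span_pair_sq_of_eq {a b x : R} (u v w : R)
    (hx : x = u * a ^ 2 + v * (a * b) + w * b ^ 2) : x ∈ span {a, b} ^ 2 := by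
  have ha : a ∈ span {a, b} := subset_span (by simp)
  have hb : b ∈ span {a, b} := subset_span (by simp)
  simp only [hx, sq]
  exact add_mem (add_mem (mul_mem_left _ u (mul_mem_mul ha ha)) (mul_mem_left _ v
    (mul_mem_mul ha hb))) (mul_mem_left _ w (mul_mem_mul hb hb))

end Ideal

open Ideal

section

variable {R : Type*} [CommRing R] {ρ : R}

lemma span_two_root_sq (hρ : ρ ^ 2 - ρ + 14 = 0) :
    span {(2 : R), ρ} ^ 2 = span {4, ρ + 2} := by
  refine le_antisymm (span_pair_sq_le ?_ ?_ ?_) (span_le.2 (Set.pair_subset ?_ ?_))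
  · exact mem_span_pair.2 ⟨1, 0, by ring⟩
  · exact mem_span_pair.2 ⟨-1, 2, by ring⟩
  · exact mem_span_pair.2 ⟨-4, 1, by linear_combination -hρ⟩
  · exact mem_span_pair_sq_of_eq 1 0 0 (by ring)
  · exact mem_span_pair_sq_of_eq 4 0 1 (by linear_combination -hρ)

lemma span_four_root_add_two_sq (hρ : ρ ^ 2 - ρ + 14 = 0) :
    span {(4 : R), ρ + 2} ^ 2 = span {2 - ρ} := by
  refine le_antisymm (span_pair_sq_le ?_ ?_ ?_) (span_le.2 (Set.singleton_subset_iff.2 ?_))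
  · exact mem_span_singleton'.2 ⟨1 + ρ, by linear_combination -hρ⟩
  · exact mem_span_singleton'.2 ⟨ρ - 3, by linear_combination -hρ⟩
  · exact mem_span_singleton'.2 ⟨-5, by linear_combination -hρ⟩
  · exact mem_span_pair_sq_of_eq (-1) 1 (-1) (by linear_combination hρ)

lemma span_two_root_pow_four (hρ : ρ ^ 2 - ρ + 14 = 0) :
    span {(2 : R), ρ} ^ 4 = span {2 - ρ} := by
  rw [show 4 = 2 * 2 from rfl, pow_mul, span_two_root_sq hρ, span_four_root_add_two_sq hρ]

lemma span_two_three_add_root : span {(2 : R), 3 + ρ} = span {2, 1 - ρ} := by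
  rw [← span_pair_neg, ← span_pair_add_mul_left (z := 2)]
  congr 3
  ring

end

theorem fourth_powers_principal_general (K : Type*) [Field K]
    (ρ : 𝓞 K) (hρ : ρ ^ 2 - ρ + 14 = 0) :
    Ideal.span {(2 : 𝓞 K), ρ} ^ 4 = Ideal.span {2 - ρ} ∧
    Ideal.span {(2 : 𝓞 K), 3 + ρ} ^ 4 = Ideal.span {1 + ρ} := by
  refine ⟨span_two_root_pow_four hρ, ?_⟩
  have hσ : (1 - ρ) ^ 2 - (1 - ρ) + 14 = 0 := by linear_combination hρ
  rw [span_two_three_add_root, span_two_root_pow_four hσ]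
  congr 2
  ring

theorem fourth_powers_principal (K : Type*) [Field K] [NumberField K]
    (hK : Module.finrank ℚ K = 2) (ρ : 𝓞 K) (hρ : ρ ^ 2 - ρ + 14 = 0) :
    Ideal.span {(2 : 𝓞 K), ρ} ^ 4 = Ideal.span {2 - ρ} ∧
    Ideal.span {(2 : 𝓞 K), 3 + ρ} ^ 4 = Ideal.span {1 + ρ} :=
  fourth_powers_principal_general K ρ hρ
end

section
/- The polynomial t^5 + 65·t^4 − 870·t^3 − 18990·t^2 + 26325·t + 255069 is irreducible over the 5-adic numbers ℚ_5, and the prime 5 is totally ramified in the field ℚ(θ) it defines. -/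
open Polynomial NumberField

instance : Fact (Nat.Prime 5) := ⟨by norm_num⟩

/-- The key polynomial identity: if `f(a) = 0` and `5g = (a-1)³`, then `g` is a root of the
Eisenstein polynomial `E(y) = y⁵ + 81080y⁴ - 72992640y³ - 59956556800y² - 574167756800y
+ 5728793886720` (up to the factor `5⁵`). -/
private lemma key_identity {A : Type} [CommRing A] (a g : A)
    (hf : a ^ 5 + 65 * a ^ 4 - 870 * a ^ 3 - 18990 * a ^ 2 + 26325 * a + 255069 = 0)
    (hg : 5 * g = (a - 1) ^ 3) :
    (5 : A) ^ 5 * (g ^ 5 + 81080 * g ^ 4 - 72992640 * g ^ 3 - 59956556800 * g ^ 2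
      - 574167756800 * g + 5728793886720) = 0 := by
  linear_combination
    (a ^ 10 - 80 * a ^ 9 + 6175 * a ^ 8 - 47040 * a ^ 7 + 2020890 * a ^ 6 - 26415072 * a ^ 5
      + 525714030 * a ^ 4 - 2488536000 * a ^ 3 + 10287898965 * a ^ 2 - 11430415440 * a
      + 71564333571) * hf +
    (((5*g) ^ 4 + (5*g) ^ 3 * (a - 1) ^ 3 + (5*g) ^ 2 * (a - 1) ^ 6 + (5*g) * (a - 1) ^ 9
        + (a - 1) ^ 12)
      + 405400 * ((5*g) ^ 3 + (5*g) ^ 2 * (a - 1) ^ 3 + (5*g) * (a - 1) ^ 6 + (a - 1) ^ 9)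
      - 1824816000 * ((5*g) ^ 2 + (5*g) * (a - 1) ^ 3 + (a - 1) ^ 6)
      - 7494569600000 * ((5*g) + (a - 1) ^ 3)
      - 358854848000000) * hg

/-- The Eisenstein polynomial over `ℤ_[5]`. -/
private noncomputable def Ez : Polynomial ℤ_[5] :=
  X ^ 5 + C 81080 * X ^ 4 - C 72992640 * X ^ 3 - C 59956556800 * X ^ 2
    - C 574167756800 * X + C 5728793886720

private lemma Ez_natDegree : Ez.natDegree = 5 := by unfold Ez; compute_degree!

private lemma Ez_monic : Ez.Monic := by unfold Ez; monicity!

private lemma five_prime_padic : Prime (5 : ℤ_[5]) := by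
  have := PadicInt.prime_p (p := 5)
  simpa using this

private lemma Ez_eisenstein : Ez.IsEisensteinAt (Ideal.span {(5 : ℤ_[5])}) := by
  have h5 : Prime (5 : ℤ_[5]) := five_prime_padic
  apply Ez_monic.isEisensteinAt_of_mem_of_notMem
  · rw [Ne, Ideal.span_singleton_eq_top]
    exact h5.not_isUnit
  · intro i hi
    rw [Ez_natDegree] at hi
    rw [Ideal.mem_span_singleton]
    interval_cases i
    · rw [show Ez.coeff 0 = 5728793886720 by simp [Ez]]
      exact ⟨1145758777344, by norm_num⟩
    · rw [show Ez.coeff 1 = -574167756800 by simp [Ez]]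
      exact ⟨-114833551360, by norm_num⟩
    · rw [show Ez.coeff 2 = -59956556800 by simp [Ez]]
      exact ⟨-11991311360, by norm_num⟩
    · rw [show Ez.coeff 3 = -72992640 by simp [Ez]]
      exact ⟨-14598528, by norm_num⟩
    · rw [show Ez.coeff 4 = 81080 by simp [Ez]]
      exact ⟨16216, by norm_num⟩
  · rw [Ideal.span_singleton_pow, Ideal.mem_span_singleton,
      show Ez.coeff 0 = 5728793886720 by simp [Ez]]
    rintro ⟨k, hk⟩
    have h1 : (5 : ℤ_[5]) * 1145758777344 = 5 * (5 * k) := by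
      calc (5 : ℤ_[5]) * 1145758777344 = 5728793886720 := by norm_num
      _ = 5 ^ 2 * k := hk
      _ = 5 * (5 * k) := by ring
    have h2 : (1145758777344 : ℤ_[5]) = 5 * k :=
      mul_left_cancel₀ (by norm_num) h1
    have hd : (5 : ℤ_[5]) ∣ 1 := by
      refine ⟨4 * k - 916607021875, ?_⟩
      have : (1 : ℤ_[5]) = 4 * (5 * k) - 5 * 916607021875 := by
        rw [← h2]; norm_num
      rw [this]; ring
    exact h5.not_isUnit (isUnit_of_dvd_one hd)

private lemma Ez_irreducible : Irreducible Ez := by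
  refine Ez_eisenstein.irreducible ?_ Ez_monic.isPrimitive (by rw [Ez_natDegree]; norm_num)
  exact (Ideal.span_singleton_prime (by norm_num)).mpr five_prime_padic

/-- The Eisenstein polynomial over `ℚ_[5]`. -/
private noncomputable def EQ : Polynomial ℚ_[5] :=
  X ^ 5 + C 81080 * X ^ 4 - C 72992640 * X ^ 3 - C 59956556800 * X ^ 2
    - C 574167756800 * X + C 5728793886720

private lemma EQ_eq_map : Ez.map (algebraMap ℤ_[5] ℚ_[5]) = EQ := by
  simp only [Ez, EQ, Polynomial.map_add, Polynomial.map_sub, Polynomial.map_mul,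
    Polynomial.map_pow, Polynomial.map_X, Polynomial.map_C]
  norm_cast

private lemma EQ_irreducible : Irreducible EQ := by
  rw [← EQ_eq_map]
  exact (Ez_monic.irreducible_iff_irreducible_map_fraction_map).mp Ez_irreducible

private lemma EQ_monic : EQ.Monic := by unfold EQ; monicity!

private theorem quintic_part1 : Irreducible (X ^ 5 + C 65 * X ^ 4 - C 870 * X ^ 3
    - C 18990 * X ^ 2 + C 26325 * X + C 255069 : (ℚ_[5])[X]) := by
  set f : (ℚ_[5])[X] := X ^ 5 + C 65 * X ^ 4 - C 870 * X ^ 3 - C 18990 * X ^ 2 +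
      C 26325 * X + C 255069 with hf_def
  have hfdeg : f.natDegree = 5 := by rw [hf_def]; compute_degree!
  have hfm : f.Monic := by rw [hf_def]; monicity!
  have hf0 : f ≠ 0 := hfm.ne_zero
  obtain ⟨g, hgirr, hgdvd⟩ := WfDvdMonoid.exists_irreducible_factor
    (f.not_isUnit_of_natDegree_pos (by omega)) hf0
  haveI := Fact.mk hgirr
  have hg0 : g ≠ 0 := hgirr.ne_zero
  set L := AdjoinRoot g
  haveI : Module.Finite ℚ_[5] L := (AdjoinRoot.powerBasis hg0).finite
  set α : L := AdjoinRoot.root g with hα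
  have hαf : aeval α f = 0 := by
    rw [AdjoinRoot.aeval_eq, AdjoinRoot.mk_eq_zero]
    exact hgdvd
  have hfα : α ^ 5 + 65 * α ^ 4 - 870 * α ^ 3 - 18990 * α ^ 2 + 26325 * α + 255069 = 0 := by
    have := hαf
    simp only [hf_def, map_add, map_sub, map_mul, map_pow, aeval_X, aeval_C, map_ofNat] at this
    convert this using 2
  have h5L : (5 : L) ≠ 0 := by
    intro h
    have h5 : (algebraMap ℚ_[5] L) 5 = (algebraMap ℚ_[5] L) 0 := by
      rw [map_ofNat, map_zero]; exact h
    have := (algebraMap ℚ_[5] L).injective h5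
    norm_num at this
  set γ : L := (α - 1) ^ 3 * (5 : L)⁻¹ with hγdef
  have hγ : 5 * γ = (α - 1) ^ 3 := by
    rw [hγdef, mul_comm, mul_assoc, inv_mul_cancel₀ h5L, mul_one]
  have hEγ' : γ ^ 5 + 81080 * γ ^ 4 - 72992640 * γ ^ 3 - 59956556800 * γ ^ 2
      - 574167756800 * γ + 5728793886720 = 0 := by
    have h := key_identity α γ hfα hγ
    have h55 : (5 : L) ^ 5 ≠ 0 := pow_ne_zero _ h5L
    exact (mul_eq_zero.mp h).resolve_left h55
  have hEγ : aeval γ EQ = 0 := by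
    simp only [EQ, map_add, map_sub, map_mul, map_pow, aeval_X, aeval_C, map_ofNat]
    convert hEγ' using 2
  have hmin : minpoly ℚ_[5] γ = EQ :=
    (minpoly.eq_of_irreducible_of_monic EQ_irreducible hEγ EQ_monic).symm
  have hle : 5 ≤ g.natDegree := by
    have h1 : (minpoly ℚ_[5] γ).natDegree ≤ Module.finrank ℚ_[5] L := minpoly.natDegree_le γ
    have h2 : Module.finrank ℚ_[5] L = g.natDegree := by
      rw [(AdjoinRoot.powerBasis hg0).finrank, AdjoinRoot.powerBasis_dim]
    rw [hmin] at h1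
    have h3 : EQ.natDegree = 5 := by unfold EQ; compute_degree!
    omega
  have hge : g.natDegree ≤ 5 := by
    have := natDegree_le_of_dvd hgdvd hf0; omega
  obtain ⟨c, hc⟩ := hgdvd
  have hc0 : c ≠ 0 := by rintro rfl; rw [mul_zero] at hc; exact hf0 hc
  have hcdeg : c.natDegree = 0 := by
    have := natDegree_mul hg0 hc0
    rw [← hc, hfdeg] at this
    omega
  have hcu : IsUnit c := by
    rw [eq_C_of_natDegree_eq_zero hcdeg]
    exact isUnit_C.mpr (isUnit_iff_ne_zero.mpr (by
      intro h
      apply hc0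
      rw [eq_C_of_natDegree_eq_zero hcdeg, h, map_zero]))
  have : Irreducible (g * c) := (associated_mul_unit_left g c hcu).symm.irreducible hgirr
  rwa [← hc] at this

private theorem quintic_part2 : ∀ (K : Type) [Field K] [NumberField K] (θ : K),
      Module.finrank ℚ K = 5 →
      θ ^ 5 + 65 * θ ^ 4 - 870 * θ ^ 3 - 18990 * θ ^ 2 + 26325 * θ + 255069 = 0 →
      ∃ P : Ideal (𝓞 K), P.IsPrime ∧ Ideal.span {(5 : 𝓞 K)} = P ^ 5 := by
  intro K _ _ θ hrank hθ
  have h5K : (5 : K) ≠ 0 := by norm_num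
  set γK : K := (θ - 1) ^ 3 * (5 : K)⁻¹ with hγdef
  have hγ : 5 * γK = (θ - 1) ^ 3 := by rw [hγdef]; field_simp
  have hEγ : γK ^ 5 + 81080 * γK ^ 4 - 72992640 * γK ^ 3 - 59956556800 * γK ^ 2
      - 574167756800 * γK + 5728793886720 = 0 := by
    have h := key_identity θ γK hθ hγ
    exact (mul_eq_zero.mp h).resolve_left (pow_ne_zero _ h5K)
  -- γK is integral over ℤ, being a root of the Eisenstein polynomial
  have hint : IsIntegral ℤ γK := by
    refine ⟨X ^ 5 + C 81080 * X ^ 4 - C 72992640 * X ^ 3 - C 59956556800 * X ^ 2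
      - C 574167756800 * X + C 5728793886720, ?_, ?_⟩
    · monicity!
    · rw [← aeval_def]
      simp only [map_add, map_sub, map_mul, map_pow, aeval_X, aeval_C, map_ofNat]
      convert hEγ using 2
  set γ : 𝓞 K := ⟨γK, hint⟩ with hγKdef
  -- the key relation γ⁵ = 5s in the ring of integers
  set s : 𝓞 K := -(16216 * γ ^ 4 - 14598528 * γ ^ 3 - 11991311360 * γ ^ 2
      - 114833551360 * γ + 1145758777344) with hsdef
  have hγ5 : γ ^ 5 = 5 * s := by
    refine RingOfIntegers.ext ?_
    show algebraMap (𝓞 K) K (γ ^ 5) = algebraMap (𝓞 K) K (5 * s)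
    rw [hsdef]
    have hγK : algebraMap (𝓞 K) K γ = γK := rfl
    simp only [map_pow, map_mul, map_neg, map_sub, map_add, map_ofNat,
      hγK]
    linear_combination hEγ
  have h50 : (5 : 𝓞 K) ≠ 0 := by norm_num
  -- the absolute norm of the ideal (5) is 5⁵ = 3125
  have hnorm : Ideal.absNorm (Ideal.span {(5 : 𝓞 K)}) = 3125 := by
    rw [Ideal.absNorm_span_singleton]
    have h5alg : (5 : 𝓞 K) = algebraMap ℤ (𝓞 K) 5 := by norm_num
    rw [h5alg, Algebra.norm_algebraMap_of_basis (Module.Free.chooseBasis ℤ (𝓞 K))]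
    rw [← Module.finrank_eq_card_chooseBasisIndex, RingOfIntegers.rank, hrank]
    norm_num
  have hne : Ideal.span {(5 : 𝓞 K)} ≠ ⊤ := by
    intro h
    rw [h] at hnorm
    rw [Ideal.absNorm_eq_one_iff.mpr rfl] at hnorm
    norm_num at hnorm
  obtain ⟨Q, hQmax, hle⟩ := Ideal.exists_le_maximal _ hne
  have hQprime : Q.IsPrime := hQmax.isPrime
  have h5Q : (5 : 𝓞 K) ∈ Q := hle (Ideal.mem_span_singleton_self _)
  have hγQ : γ ∈ Q := by
    refine hQprime.mem_of_pow_mem 5 ?_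
    rw [hγ5]
    exact Ideal.mul_mem_right _ _ h5Q
  have hsQ : s ∉ Q := by
    intro hs
    have hA : (16216 * γ ^ 3 - 14598528 * γ ^ 2 - 11991311360 * γ - 114833551360) * γ ∈ Q :=
      Q.mul_mem_left _ hγQ
    have huQ : (1145758777344 : 𝓞 K) ∈ Q := by
      have heq : (1145758777344 : 𝓞 K) =
          -s - (16216 * γ ^ 3 - 14598528 * γ ^ 2 - 11991311360 * γ - 114833551360) * γ := by
        rw [hsdef]; ring
      rw [heq]
      exact Q.sub_mem (Q.neg_mem hs) hA
    have hone : (1 : 𝓞 K) ∈ Q := by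
      have heq : (1 : 𝓞 K) = 4 * 1145758777344 + (-916607021875) * 5 := by norm_num
      rw [heq]
      exact Q.add_mem (Q.mul_mem_left _ huQ) (Q.mul_mem_left _ h5Q)
    exact hQmax.ne_top ((Ideal.eq_top_iff_one Q).mpr hone)
  have hQbot : Q ≠ ⊥ := by
    intro h
    rw [h, Ideal.mem_bot] at h5Q
    exact h50 h5Q
  -- Q as a height-one prime, with its adic valuation
  set v : IsDedekindDomain.HeightOneSpectrum (𝓞 K) := ⟨Q, hQprime, hQbot⟩ with hvdef
  have hγ0 : γ ≠ 0 := by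
    intro h
    have hzero : γK = 0 := by
      have : algebraMap (𝓞 K) K γ = algebraMap (𝓞 K) K 0 := by rw [h]
      rw [hγKdef, map_zero] at this
      exact this
    rw [hzero, mul_zero] at hγ
    have hθ1 : θ = 1 := by
      have h3 := pow_eq_zero_iff (n := 3) (by norm_num) |>.mp hγ.symm
      exact sub_eq_zero.mp h3
    rw [hθ1] at hθ
    norm_num at hθ
  have hs0 : s ≠ 0 := by
    intro h
    rw [h, mul_zero, pow_eq_zero_iff (by norm_num : (5:ℕ) ≠ 0)] at hγ5
    exact hγ0 hγ5
  have hvγ : v.intValuationDef γ ≤ Multiplicative.ofAdd (-(1 : ℤ)) := by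
    have := (v.intValuation_le_pow_iff_dvd γ 1).mpr (by
      rw [pow_one]
      exact (Ideal.dvd_iff_le).mpr ((Ideal.span_singleton_le_iff_mem Q).mpr hγQ))
    exact this
  have hvs : v.intValuationDef s = 1 := by
    rcases lt_or_eq_of_le (v.intValuation_le_one s) with hlt | heq
    · exact absurd ((Ideal.span_singleton_le_iff_mem Q).mp
        (Ideal.dvd_iff_le.mp ((v.intValuation_lt_one_iff_dvd s).mp hlt))) hsQ
    · exact heq
  have hv5 : v.intValuationDef (5 : 𝓞 K) ≤ Multiplicative.ofAdd (-(5 : ℤ)) := by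
    have hmul : v.intValuationDef (5 : 𝓞 K) = (v.intValuationDef γ) ^ 5 := by
      have h1 : v.intValuation (γ ^ 5) = (v.intValuation γ) ^ 5 := map_pow _ _ _
      have h2 : v.intValuation (5 * s) = v.intValuation (5 : 𝓞 K) * v.intValuation s :=
        map_mul _ _ _
      have h3 : v.intValuation γ = v.intValuationDef γ := rfl
      have h4 : v.intValuation (5 : 𝓞 K) = v.intValuationDef (5 : 𝓞 K) := rfl
      have h5 : v.intValuation s = v.intValuationDef s := rfl
      rw [hγ5] at h1
      rw [h2, h4, h5, hvs, mul_one, h3] at h1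
      exact h1
    rw [hmul]
    calc (v.intValuationDef γ) ^ 5
        ≤ (((Multiplicative.ofAdd (-(1 : ℤ)) : Multiplicative ℤ) :
            WithZero (Multiplicative ℤ))) ^ 5 := pow_le_pow_left' hvγ 5
    _ = ((Multiplicative.ofAdd (-(5 : ℤ)) : Multiplicative ℤ) : WithZero (Multiplicative ℤ)) := by
          rw [← WithZero.coe_pow]
          congr 1
  have hdvd : Q ^ 5 ∣ Ideal.span {(5 : 𝓞 K)} := by
    have := (v.intValuation_le_pow_iff_dvd (5 : 𝓞 K) 5).mp (by exact hv5)
    exact this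
  obtain ⟨J, hJ⟩ := hdvd
  have hnormeq : Ideal.absNorm Q ^ 5 * Ideal.absNorm J = 3125 := by
    rw [← map_pow, ← map_mul, ← hJ, hnorm]
  have hQ1 : Ideal.absNorm Q ≠ 1 := by
    intro h
    exact hQmax.ne_top (Ideal.absNorm_eq_one_iff.mp h)
  have hQle : Ideal.absNorm Q ≤ 5 := by
    by_contra h
    push_neg at h
    have : 6 ^ 5 ≤ Ideal.absNorm Q ^ 5 := Nat.pow_le_pow_left h 5
    nlinarith [Nat.one_le_iff_ne_zero.mpr (show Ideal.absNorm J ≠ 0 by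
      intro hJ0; rw [hJ0, mul_zero] at hnormeq; norm_num at hnormeq)]
  have hQ0 : Ideal.absNorm Q ≠ 0 := by
    intro h0
    rw [h0] at hnormeq
    norm_num at hnormeq
  have hm : Ideal.absNorm Q = 2 ∨ Ideal.absNorm Q = 3 ∨ Ideal.absNorm Q = 4 ∨
      Ideal.absNorm Q = 5 := by omega
  have hJ1 : Ideal.absNorm J = 1 := by
    rcases hm with h | h | h | h <;> rw [h] at hnormeq <;> omega
  have hJtop : J = ⊤ := Ideal.absNorm_eq_one_iff.mp hJ1
  exact ⟨Q, hQprime, by rw [hJ, hJtop, Ideal.mul_top]⟩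

theorem quintic_irreducible_over_Q5_and_totally_ramified :
    Irreducible (X ^ 5 + C 65 * X ^ 4 - C 870 * X ^ 3 - C 18990 * X ^ 2 +
      C 26325 * X + C 255069 : (ℚ_[5])[X]) ∧
    ∀ (K : Type) [Field K] [NumberField K] (θ : K),
      Module.finrank ℚ K = 5 →
      θ ^ 5 + 65 * θ ^ 4 - 870 * θ ^ 3 - 18990 * θ ^ 2 + 26325 * θ + 255069 = 0 →
      ∃ P : Ideal (𝓞 K), P.IsPrime ∧ Ideal.span {(5 : 𝓞 K)} = P ^ 5 :=
  ⟨quintic_part1, quintic_part2⟩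
end
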